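/- arXiv:1204.5335 — 3 statements merged into one kernel-verified Lean document; each statement's English description precedes it below -/
import Mathlib

section
/- If H is a k-uniform hypergraph with no 3-comb, and I and F are two matchings in H, then every edge of the symmetric difference I ⊕ F intersects at most two other edges of I ⊕ F; equivalently, the intersection graph L(I ⊕ F) has maximum degree at most 2. -/
/-- A matching in a hypergraph: a set of pairwise disjoint edges. -/
def IsMatching {V : Type*} [DecidableEq V] (M : Finset (Finset V)) : Prop :=
  ∀ e ∈ M, ∀ f ∈ M, e ≠ f → Disjoint e f

/-- A 3-comb: a matching {e1,e2,e3} together with an edge e4 intersecting each of them. -/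
def HasThreeComb {V : Type*} [DecidableEq V] (H : Finset (Finset V)) : Prop :=
  ∃ e1 ∈ H, ∃ e2 ∈ H, ∃ e3 ∈ H, ∃ e4 ∈ H,
    e1 ≠ e2 ∧ e1 ≠ e3 ∧ e2 ≠ e3 ∧ e4 ≠ e1 ∧ e4 ≠ e2 ∧ e4 ≠ e3 ∧
    Disjoint e1 e2 ∧ Disjoint e1 e3 ∧ Disjoint e2 e3 ∧
    ¬ Disjoint e4 e1 ∧ ¬ Disjoint e4 e2 ∧ ¬ Disjoint e4 e3

private lemma aux_side {V : Type*} [DecidableEq V]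
    (H I F : Finset (Finset V))
    (hcomb : ¬ HasThreeComb H)
    (hI : I ⊆ H) (hIm : IsMatching I) (hF : F ⊆ H) (hFm : IsMatching F)
    (e : Finset V) (heI : e ∈ I) (heF : e ∉ F) :
    (((symmDiff I F)).filter fun f => f ≠ e ∧ (e ∩ f).Nonempty).card ≤ 2 := by
  by_contra h
  push_neg at h
  obtain ⟨f1, h1, f2, h2, f3, h3, h12, h13, h23⟩ := Finset.two_lt_card.mp h
  simp only [Finset.mem_filter, Finset.mem_symmDiff] at h1 h2 h3
  -- each fi must be in F \ I
  have key : ∀ f : Finset V, ((f ∈ I ∧ f ∉ F ∨ f ∈ F ∧ f ∉ I) ∧ f ≠ e ∧ (e ∩ f).Nonempty) →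
      f ∈ F ∧ f ∉ I := by
    rintro f ⟨hmem, hne, hint⟩
    rcases hmem with ⟨hfI, _⟩ | hfF
    · obtain ⟨x, hx⟩ := hint
      simp only [Finset.mem_inter] at hx
      exact absurd hx.2 (Finset.disjoint_left.mp (hIm e heI f hfI (Ne.symm hne)) hx.1)
    · exact hfF
  have k1 := key f1 h1
  have k2 := key f2 h2
  have k3 := key f3 h3
  apply hcomb
  refine ⟨f1, hF k1.1, f2, hF k2.1, f3, hF k3.1, e, hI heI, h12, h13, h23,
    Ne.symm h1.2.1, Ne.symm h2.2.1, Ne.symm h3.2.1,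
    hFm f1 k1.1 f2 k2.1 h12, hFm f1 k1.1 f3 k3.1 h13, hFm f2 k2.1 f3 k3.1 h23,
    ?_, ?_, ?_⟩ <;>
  · rw [Finset.not_disjoint_iff_nonempty_inter]
    first
    | exact h1.2.2
    | exact h2.2.2
    | exact h3.2.2

/-- In a k-uniform hypergraph with no 3-comb, every edge of the symmetric difference
of two matchings intersects at most two other edges of the symmetric difference,
i.e. the intersection graph of `(symmDiff I F)` has maximum degree at most 2. -/
theorem symmDiff_interGraph_maxDegree_le_two {V : Type*} [DecidableEq V] (k : ℕ)
    (H I F : Finset (Finset V)) (hk : ∀ e ∈ H, e.card = k)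
    (hcomb : ¬ HasThreeComb H)
    (hI : I ⊆ H) (hIm : IsMatching I) (hF : F ⊆ H) (hFm : IsMatching F) :
    ∀ e ∈ (symmDiff I F), (((symmDiff I F)).filter fun f => f ≠ e ∧ (e ∩ f).Nonempty).card ≤ 2 := by
  intro e he
  rw [Finset.mem_symmDiff] at he
  rcases he with ⟨heI, heF⟩ | ⟨heF, heI⟩
  · exact aux_side H I F hcomb hI hIm hF hFm e heI heF
  · have := aux_side H F I hcomb hF hFm hI hIm e heF heI
    rwa [symmDiff_comm] at this
end

section
/- Let I and F be matchings in a k-uniform hypergraph H with no 3-comb. Then every connected component of the hypergraph I ⊕ F is a path or a cycle in which edges of I alternate with edges of F; in particular, every cycle-component has an even number of edges. -/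
/-- Two edges of `D` are connected (lie in the same component) if they are joined by
a chain of pairwise intersecting edges of `D`. -/
def Conn {V : Type*} [DecidableEq V] (D : Finset (Finset V)) (a b : Finset V) : Prop :=
  Relation.ReflTransGen (fun x y => x ∈ D ∧ y ∈ D ∧ (x ∩ y).Nonempty) a b

/-- A (hypergraph) path, given as a list of edges: consecutive edges intersect and
no other pairs do. -/
def IsPathList {V : Type*} [DecidableEq V] (l : List (Finset V)) : Prop :=
  l ≠ [] ∧ l.Nodup ∧ ∀ i j (hi : i < l.length) (hj : j < l.length), i < j →
    ((l.get ⟨i, hi⟩ ∩ l.get ⟨j, hj⟩).Nonempty ↔ j = i + 1)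

/-- A (hypergraph) cycle, given as a list of at least three edges: consecutive edges
intersect, the first and last edges intersect, and no other pairs do. -/
def IsCycleList {V : Type*} [DecidableEq V] (l : List (Finset V)) : Prop :=
  3 ≤ l.length ∧ l.Nodup ∧ ∀ i j (hi : i < l.length) (hj : j < l.length), i < j →
    ((l.get ⟨i, hi⟩ ∩ l.get ⟨j, hj⟩).Nonempty ↔ (j = i + 1 ∨ (i = 0 ∧ j = l.length - 1)))

/-- Along the list, edges of `I` alternate with edges of `F`. -/
def Alternates {V : Type*} [DecidableEq V] (I F : Finset (Finset V))
    (l : List (Finset V)) : Prop :=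
  ∀ i (h : i + 1 < l.length),
    (l.get ⟨i, by omega⟩ ∈ I ∧ l.get ⟨i + 1, h⟩ ∈ F) ∨
    (l.get ⟨i, by omega⟩ ∈ F ∧ l.get ⟨i + 1, h⟩ ∈ I)

/-!
Two distinct intersecting edges of `I ∆ F` lie in different matchings. Hence if an edge `x` of
`I ∆ F` met three others, these would all lie in the matching not containing `x`, so they would
be pairwise disjoint and form a 3-comb with `x`. So every edge of `I ∆ F` meets at most two
others. A chain of consecutively intersecting edges that cannot be extended at either end then
exhausts its component, and the degree bound rules out every chord except the one between the
two ends, which closes a cycle. Consecutive edges alternate between `I` and `F`, so the closing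
chord of a cycle joins edges of different parity and the cycle is even.
-/

section Chains

variable {V : Type*} [DecidableEq V] {D : Finset (Finset V)}

def meetingEdges (D : Finset (Finset V)) (x : Finset V) : Finset (Finset V) :=
  {y ∈ D | y ≠ x ∧ (x ∩ y).Nonempty}

structure IsChainIn (D : Finset (Finset V)) (l : List (Finset V)) : Prop where
  nodup : l.Nodup
  subset : ∀ x ∈ l, x ∈ D
  isChain : l.IsChain (fun x y => (x ∩ y).Nonempty)

structure IsMaximalChainIn (D : Finset (Finset V)) (l : List (Finset V)) : Prop
    extends IsChainIn D l where
  head_maximal : ∀ y ∈ D, y ∉ l → ∀ x ∈ l.head?, ¬ (y ∩ x).Nonempty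
  getLast_maximal : ∀ y ∈ D, y ∉ l → ∀ x ∈ l.getLast?, ¬ (x ∩ y).Nonempty

theorem Conn.symm {a b : Finset V} (h : Conn D a b) : Conn D b a := by
  induction h with
  | refl => exact .refl
  | tail _ hstep ih =>
    exact .head ⟨hstep.2.1, hstep.1, by rw [Finset.inter_comm]; exact hstep.2.2⟩ ih

namespace IsChainIn

variable {l : List (Finset V)}

theorem length_le_card (hl : IsChainIn D l) : l.length ≤ D.card := by
  rw [← List.toFinset_card_of_nodup hl.nodup]
  exact Finset.card_le_card fun x hx => hl.subset x (List.mem_toFinset.mp hx)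

theorem getElem_mem (hl : IsChainIn D l) (i : ℕ) (hi : i < l.length) : l[i] ∈ D :=
  hl.subset _ (List.getElem_mem hi)

theorem getElem_inter_getElem_succ (hl : IsChainIn D l) (i : ℕ) (hi : i + 1 < l.length) :
    (l[i] ∩ l[i + 1]).Nonempty :=
  hl.isChain.getElem i hi

theorem singleton {x : Finset V} (hx : x ∈ D) : IsChainIn D [x] where
  nodup := List.nodup_singleton x
  subset := by simpa using hx
  isChain := List.isChain_singleton x

theorem cons {y : Finset V} (hl : IsChainIn D l) (hy : y ∈ D) (hyl : y ∉ l)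
    (hmeet : ∀ x ∈ l.head?, (y ∩ x).Nonempty) : IsChainIn D (y :: l) where
  nodup := List.nodup_cons.mpr ⟨hyl, hl.nodup⟩
  subset := List.forall_mem_cons.mpr ⟨hy, hl.subset⟩
  isChain := hl.isChain.cons hmeet

theorem concat {y : Finset V} (hl : IsChainIn D l) (hy : y ∈ D) (hyl : y ∉ l)
    (hmeet : ∀ x ∈ l.getLast?, (x ∩ y).Nonempty) : IsChainIn D (l ++ [y]) where
  nodup := List.nodup_append.mpr ⟨hl.nodup, List.nodup_singleton y,
    fun _ hx _ hz => by rintro rfl; exact hyl (List.mem_singleton.mp hz ▸ hx)⟩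
  subset := by simpa [or_imp, forall_and] using ⟨hl.subset, hy⟩
  isChain := hl.isChain.append (List.isChain_singleton y) fun x hx _ hz => by
    simp only [List.head?_cons, Option.mem_def, Option.some.injEq] at hz
    exact hz ▸ hmeet x hx

theorem exists_maximal {l : List (Finset V)} (hl : IsChainIn D l) :
    ∃ l', IsMaximalChainIn D l' ∧ l ⊆ l' := by
  by_cases hhead : ∃ y ∈ D, y ∉ l ∧ ∃ x ∈ l.head?, (y ∩ x).Nonempty
  · obtain ⟨y, hy, hyl, x, hx, hmeet⟩ := hhead
    have hl' := hl.cons hy hyl fun x' hx' => Option.mem_unique hx hx' ▸ hmeet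
    have := hl'.length_le_card
    obtain ⟨l', hmax, hsub⟩ := hl'.exists_maximal
    exact ⟨l', hmax, List.Subset.trans (List.subset_cons_self y l) hsub⟩
  by_cases hlast : ∃ y ∈ D, y ∉ l ∧ ∃ x ∈ l.getLast?, (x ∩ y).Nonempty
  · obtain ⟨y, hy, hyl, x, hx, hmeet⟩ := hlast
    have hl' := hl.concat hy hyl fun x' hx' => Option.mem_unique hx hx' ▸ hmeet
    have := hl'.length_le_card
    obtain ⟨l', hmax, hsub⟩ := hl'.exists_maximal
    exact ⟨l', hmax, List.Subset.trans (List.subset_append_left l [y]) hsub⟩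
  exact ⟨l, ⟨hl, fun y hy hyl x hx h => hhead ⟨y, hy, hyl, x, hx, h⟩,
    fun y hy hyl x hx h => hlast ⟨y, hy, hyl, x, hx, h⟩⟩, List.Subset.refl l⟩
termination_by D.card - l.length
decreasing_by
  all_goals simp only [List.length_cons, List.length_append] at this ⊢; omega

theorem conn (hl : IsChainIn D l) {a b : Finset V} (ha : a ∈ l) (hb : b ∈ l) :
    Conn D a b := by
  have hne : l ≠ [] := List.ne_nil_of_mem ha
  have hhead : ∀ x ∈ l, Conn D (l.head hne) x :=
    (hl.isChain.imp_of_mem_imp fun x y hx hy h => ⟨hl.subset x hx, hl.subset y hy, h⟩).induction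
      _ l (fun _ _ hxy hx => hx.tail hxy) fun _ => .refl
  exact Relation.ReflTransGen.trans (hhead a ha).symm (hhead b hb)

variable (hdeg : ∀ x ∈ D, (meetingEdges D x).card ≤ 2)
include hdeg

theorem eq_or_eq_of_inter_nonempty (hl : IsChainIn D l) {i : ℕ} (hi : i + 2 < l.length)
    {y : Finset V} (hy : y ∈ D) (hyi : y ≠ l[i + 1]) (hmeet : (l[i + 1] ∩ y).Nonempty) :
    y = l[i] ∨ y = l[i + 2] := by
  by_contra! hne
  refine (hdeg _ (hl.getElem_mem (i + 1) (by omega))).not_gt (Finset.two_lt_card.mpr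
    ⟨l[i], ?_, l[i + 2], ?_, y, ?_, by simp [hl.nodup.getElem_inj_iff], hne.1.symm, hne.2.symm⟩)
  · refine Finset.mem_filter.mpr ⟨hl.getElem_mem i _, by simp [hl.nodup.getElem_inj_iff], ?_⟩
    rw [Finset.inter_comm]
    exact hl.getElem_inter_getElem_succ i _
  · exact Finset.mem_filter.mpr ⟨hl.getElem_mem _ _, by simp [hl.nodup.getElem_inj_iff],
      hl.getElem_inter_getElem_succ (i + 1) hi⟩
  · exact Finset.mem_filter.mpr ⟨hy, hyi, hmeet⟩

theorem eq_add_one_or_of_inter_nonempty (hl : IsChainIn D l) {i j : ℕ} (hij : i < j)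
    (hj : j < l.length) (hmeet : (l[i] ∩ l[j]).Nonempty) :
    j = i + 1 ∨ (i = 0 ∧ j = l.length - 1) := by
  rcases i with _ | m
  · by_cases hlast : j = l.length - 1
    · exact Or.inr ⟨rfl, hlast⟩
    obtain ⟨m, rfl⟩ : ∃ m, j = m + 1 := ⟨j - 1, by omega⟩
    rcases hl.eq_or_eq_of_inter_nonempty hdeg (i := m) (by omega) (hl.getElem_mem 0 (by omega))
      (by simp [hl.nodup.getElem_inj_iff]) (by rwa [Finset.inter_comm]) with h | h <;>
      simp only [hl.nodup.getElem_inj_iff] at h <;> omega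
  · rcases hl.eq_or_eq_of_inter_nonempty hdeg (i := m) (by omega) (hl.getElem_mem j hj)
      (by simp [hl.nodup.getElem_inj_iff]; omega) hmeet with h | h <;>
      simp only [hl.nodup.getElem_inj_iff] at h <;> omega

theorem isPathList_or_isCycleList (hl : IsChainIn D l) (hne : l ≠ []) :
    IsPathList l ∨ IsCycleList l := by
  by_cases hcyc : ∃ h : 3 ≤ l.length, (l[0] ∩ l[l.length - 1]).Nonempty
  · obtain ⟨hlen, hends⟩ := hcyc
    refine Or.inr ⟨hlen, hl.nodup, fun i j _ hj hij =>
      ⟨hl.eq_add_one_or_of_inter_nonempty hdeg hij hj, ?_⟩⟩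
    rintro (rfl | ⟨rfl, rfl⟩)
    · exact hl.getElem_inter_getElem_succ i hj
    · exact hends
  · refine Or.inl ⟨hne, hl.nodup, fun i j hi hj hij => ⟨fun hmeet => ?_, ?_⟩⟩
    · rcases hl.eq_add_one_or_of_inter_nonempty hdeg hij hj hmeet with h | ⟨rfl, rfl⟩
      · exact h
      · by_contra
        exact hcyc ⟨by omega, hmeet⟩
    · rintro rfl
      exact hl.getElem_inter_getElem_succ i hj

end IsChainIn

namespace IsMaximalChainIn

variable {l : List (Finset V)} (hdeg : ∀ x ∈ D, (meetingEdges D x).card ≤ 2)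
include hdeg

theorem mem_of_inter_nonempty (hl : IsMaximalChainIn D l) {x y : Finset V} (hx : x ∈ l)
    (hy : y ∈ D) (hmeet : (x ∩ y).Nonempty) : y ∈ l := by
  by_contra hyl
  obtain ⟨i, hi, rfl⟩ := List.getElem_of_mem hx
  rcases i with _ | i
  · refine hl.head_maximal y hy hyl l[0] (by simp [List.head?_eq_getElem?]) ?_
    rwa [Finset.inter_comm]
  by_cases hlast : i + 2 < l.length
  · rcases hl.eq_or_eq_of_inter_nonempty hdeg hlast hy
      (by rintro rfl; exact hyl (List.getElem_mem _)) hmeet with rfl | rfl <;>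
      exact hyl (List.getElem_mem _)
  · refine hl.getLast_maximal y hy hyl _ ?_ hmeet
    rw [List.getLast?_eq_getElem?, Option.mem_def, List.getElem?_eq_getElem (by omega)]
    congr 2
    omega

theorem mem_iff_conn (hl : IsMaximalChainIn D l) {e : Finset V} (he : e ∈ l) (f : Finset V) :
    f ∈ l ↔ f ∈ D ∧ Conn D e f := by
  refine ⟨fun hf => ⟨hl.subset f hf, hl.conn he hf⟩, ?_⟩
  rintro ⟨-, hef⟩
  induction hef with
  | refl => exact he
  | tail _ hstep ih => exact hl.mem_of_inter_nonempty hdeg ih hstep.2.1 hstep.2.2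

end IsMaximalChainIn

end Chains

section Matchings

variable {V : Type*} [DecidableEq V] {I F : Finset (Finset V)}

theorem mem_iff_notMem_of_inter_nonempty (hIm : IsMatching I) (hFm : IsMatching F)
    {x y : Finset V} (hx : x ∈ symmDiff I F) (hy : y ∈ symmDiff I F) (hxy : x ≠ y)
    (hmeet : (x ∩ y).Nonempty) : x ∈ I ↔ y ∉ I := by
  have hndis := Finset.not_disjoint_iff_nonempty_inter.mpr hmeet
  rw [Finset.mem_symmDiff] at hx hy
  rcases hx with ⟨hxI, hxF⟩ | ⟨hxF, hxI⟩ <;> rcases hy with ⟨hyI, hyF⟩ | ⟨hyF, hyI⟩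
  · exact absurd (hIm x hxI y hyI hxy) hndis
  · simp [hxI, hyI]
  · simp [hxI, hyI]
  · exact absurd (hFm x hxF y hyF hxy) hndis

theorem hasThreeComb_of_two_lt_card {H M S : Finset (Finset V)} (hMH : M ⊆ H)
    (hMm : IsMatching M) {x : Finset V} (hx : x ∈ H) (hSM : S ⊆ M) (hS : 2 < S.card)
    (hmeet : ∀ y ∈ S, y ≠ x ∧ (x ∩ y).Nonempty) : HasThreeComb H := by
  obtain ⟨a, ha, b, hb, c, hc, hab, hac, hbc⟩ := Finset.two_lt_card.mp hS
  have hndis (y : Finset V) (hy : y ∈ S) : ¬ Disjoint x y :=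
    Finset.not_disjoint_iff_nonempty_inter.mpr (hmeet y hy).2
  exact ⟨a, hMH (hSM ha), b, hMH (hSM hb), c, hMH (hSM hc), x, hx, hab, hac, hbc,
    (hmeet a ha).1.symm, (hmeet b hb).1.symm, (hmeet c hc).1.symm,
    hMm a (hSM ha) b (hSM hb) hab, hMm a (hSM ha) c (hSM hc) hac,
    hMm b (hSM hb) c (hSM hc) hbc,
    hndis a ha, hndis b hb, hndis c hc⟩

theorem card_meetingEdges_symmDiff_le_two {H : Finset (Finset V)} (hcomb : ¬ HasThreeComb H)
    (hI : I ⊆ H) (hIm : IsMatching I) (hF : F ⊆ H) (hFm : IsMatching F) {x : Finset V}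
    (hx : x ∈ symmDiff I F) : (meetingEdges (symmDiff I F) x).card ≤ 2 := by
  by_contra! hS
  have hmeet (y : Finset V) (hy : y ∈ meetingEdges (symmDiff I F) x) :=
    (Finset.mem_filter.mp hy).2
  have hside (y : Finset V) (hy : y ∈ meetingEdges (symmDiff I F) x) :
      (y ∈ I ∨ y ∈ F) ∧ (x ∈ I ↔ y ∉ I) := by
    obtain ⟨hyD, hyx, hxy⟩ := Finset.mem_filter.mp hy
    refine ⟨?_, mem_iff_notMem_of_inter_nonempty hIm hFm hx hyD (Ne.symm hyx) hxy⟩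
    rcases Finset.mem_symmDiff.mp hyD with h | h
    exacts [Or.inl h.1, Or.inr h.1]
  rcases Finset.mem_symmDiff.mp hx with ⟨hxI, -⟩ | ⟨hxF, hxI⟩
  · refine hcomb (hasThreeComb_of_two_lt_card hF hFm (hI hxI) (fun y hy => ?_) hS hmeet)
    have := hside y hy
    tauto
  · refine hcomb (hasThreeComb_of_two_lt_card hI hIm (hF hxF) (fun y hy => ?_) hS hmeet)
    have := hside y hy
    tauto

namespace IsChainIn

variable {l : List (Finset V)} (hIm : IsMatching I) (hFm : IsMatching F)
include hIm hFm

theorem getElem_mem_iff_getElem_succ_notMem (hl : IsChainIn (symmDiff I F) l) (i : ℕ)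
    (hi : i + 1 < l.length) : l[i] ∈ I ↔ l[i + 1] ∉ I :=
  mem_iff_notMem_of_inter_nonempty hIm hFm (hl.getElem_mem i _) (hl.getElem_mem (i + 1) hi)
    (by simp [hl.nodup.getElem_inj_iff]) (hl.getElem_inter_getElem_succ i hi)

theorem alternates (hl : IsChainIn (symmDiff I F) l) : Alternates I F l := by
  intro i hi
  have hside := hl.getElem_mem_iff_getElem_succ_notMem hIm hFm i hi
  have hx := Finset.mem_symmDiff.mp (hl.getElem_mem i (by omega))
  have hy := Finset.mem_symmDiff.mp (hl.getElem_mem (i + 1) hi)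
  simp only [List.get_eq_getElem]
  tauto

theorem getElem_mem_iff_getElem_zero_mem (hl : IsChainIn (symmDiff I F) l) (i : ℕ)
    (hi : i < l.length) : (l[i] ∈ I ↔ l[0] ∈ I) ↔ Even i := by
  induction i with
  | zero => simp
  | succ i ih =>
    have hside := hl.getElem_mem_iff_getElem_succ_notMem hIm hFm i hi
    rw [Nat.even_add_one, ← ih (by omega)]
    tauto

theorem even_length (hl : IsChainIn (symmDiff I F) l) (hc : IsCycleList l) : Even l.length := by
  obtain ⟨hlen, -, hchord⟩ := hc
  have hends : (l[0] ∩ l[l.length - 1]).Nonempty :=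
    (hchord 0 (l.length - 1) (by omega) (by omega) (by omega)).mpr (Or.inr ⟨rfl, rfl⟩)
  have hside := mem_iff_notMem_of_inter_nonempty hIm hFm (hl.getElem_mem 0 _)
    (hl.getElem_mem _ _) (by simp [hl.nodup.getElem_inj_iff]; omega) hends
  have hodd : ¬ Even (l.length - 1) := by
    rw [← hl.getElem_mem_iff_getElem_zero_mem hIm hFm _ (by omega)]
    tauto
  obtain ⟨n, hn⟩ : ∃ n, l.length = n + 1 := ⟨l.length - 1, by omega⟩
  rw [hn, Nat.even_add_one]
  simpa [hn] using hodd

end IsChainIn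

end Matchings

theorem components_of_symmDiff_are_paths_or_cycles_general {V : Type*} [DecidableEq V]
    (H I F : Finset (Finset V))
    (hcomb : ¬ HasThreeComb H)
    (hI : I ⊆ H) (hIm : IsMatching I) (hF : F ⊆ H) (hFm : IsMatching F) :
    ∀ e ∈ symmDiff I F, ∃ l : List (Finset V),
      (IsPathList l ∨ (IsCycleList l ∧ Even l.length)) ∧
      Alternates I F l ∧
      (∀ f : Finset V, f ∈ l ↔ (f ∈ symmDiff I F ∧ Conn (symmDiff I F) e f)) := by
  intro e he
  have hdeg (x : Finset V) (hx : x ∈ symmDiff I F) :=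
    card_meetingEdges_symmDiff_le_two hcomb hI hIm hF hFm hx
  obtain ⟨l, hl, hsub⟩ := (IsChainIn.singleton he).exists_maximal
  have hel : e ∈ l := hsub (List.mem_singleton_self e)
  refine ⟨l, ?_, hl.alternates hIm hFm, hl.mem_iff_conn hdeg hel⟩
  rcases hl.isPathList_or_isCycleList hdeg (List.ne_nil_of_mem hel) with hpath | hcycle
  · exact Or.inl hpath
  · exact Or.inr ⟨hcycle, hl.even_length hIm hFm hcycle⟩

/-- If `I` and `F` are matchings in a `k`-uniform hypergraph `H` with no 3-comb, then
every connected component of `I ⊕ F` is a path or a cycle in which edges of `I`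
alternate with edges of `F`; in particular every cycle-component has an even
number of edges. -/
theorem components_of_symmDiff_are_paths_or_cycles {V : Type*} [DecidableEq V] (k : ℕ)
    (H I F : Finset (Finset V)) (hk : ∀ e ∈ H, e.card = k)
    (hcomb : ¬ HasThreeComb H)
    (hI : I ⊆ H) (hIm : IsMatching I) (hF : F ⊆ H) (hFm : IsMatching F) :
    ∀ e ∈ symmDiff I F, ∃ l : List (Finset V),
      (IsPathList l ∨ (IsCycleList l ∧ Even l.length)) ∧
      Alternates I F l ∧
      (∀ f : Finset V, f ∈ l ↔ (f ∈ symmDiff I F ∧ Conn (symmDiff I F) e f)) :=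
  components_of_symmDiff_are_paths_or_cycles_general H I F hcomb hI hIm hF hFm
end

section
/- The k-uniform hypergraph H constructed from a graph G by subdividing each edge with k−2 new vertices contains no 3-comb. -/
/-- Replace a graph edge `e = {u,v}` by the `k`-set `{u, v^e_1, …, v^e_{k-2}, v}`,
where the `k-2` subdivision vertices are new vertices private to `e`. -/
def hedge (k : ℕ) {V : Type*} [DecidableEq V] (e : Finset V) :
    Finset (V ⊕ (Finset V × Fin (k - 2))) :=
  e.image Sum.inl ∪ (Finset.univ.image fun i : Fin (k - 2) => Sum.inr (e, i))

lemma mem_hedge {k : ℕ} {V : Type*} [DecidableEq V] {e : Finset V}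
    {x : V ⊕ (Finset V × Fin (k - 2))} :
    x ∈ hedge k e ↔ (∃ v ∈ e, x = Sum.inl v) ∨ (∃ i : Fin (k - 2), x = Sum.inr (e, i)) := by
  simp [hedge, eq_comm]

lemma hedge_ne {k : ℕ} (hk : 3 ≤ k) {V : Type*} [DecidableEq V] {e f : Finset V}
    (h : hedge k e = hedge k f) : e = f := by
  have hpos : 0 < k - 2 := by omega
  have : (Sum.inr (e, ⟨0, hpos⟩) : V ⊕ (Finset V × Fin (k - 2))) ∈ hedge k f := by
    rw [← h, mem_hedge]; exact Or.inr ⟨⟨0, hpos⟩, rfl⟩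
  rcases mem_hedge.1 this with ⟨v, _, hv⟩ | ⟨i, hi⟩
  · exact absurd hv (by simp)
  · exact congrArg Prod.fst (Sum.inr.inj hi)

lemma exists_common {k : ℕ} {V : Type*} [DecidableEq V] {e f : Finset V}
    (hne : e ≠ f) (h : ¬ Disjoint (hedge k e) (hedge k f)) : ∃ x, x ∈ e ∧ x ∈ f := by
  rw [Finset.not_disjoint_iff] at h
  obtain ⟨x, hxe, hxf⟩ := h
  rcases mem_hedge.1 hxe with ⟨v, hv, rfl⟩ | ⟨i, rfl⟩
  · rcases mem_hedge.1 hxf with ⟨w, hw, hvw⟩ | ⟨j, hj⟩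
    · exact ⟨v, hv, by rwa [Sum.inl.inj hvw]⟩
    · exact absurd hj (by simp)
  · rcases mem_hedge.1 hxf with ⟨w, _, hw⟩ | ⟨j, hj⟩
    · exact absurd hw (by simp)
    · exact absurd (congrArg Prod.fst (Sum.inr.inj hj)) hne

lemma disjoint_base {k : ℕ} {V : Type*} [DecidableEq V] {e f : Finset V}
    (h : Disjoint (hedge k e) (hedge k f)) : Disjoint e f := by
  rw [Finset.disjoint_left] at h ⊢
  intro x hxe hxf
  exact h (mem_hedge.2 (Or.inl ⟨x, hxe, rfl⟩)) (mem_hedge.2 (Or.inl ⟨x, hxf, rfl⟩))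

/-- The `k`-uniform hypergraph obtained from a graph by subdividing each edge with
`k - 2` new vertices contains no 3-comb. -/
theorem subdivided_graph_no_threeComb {V : Type*} [DecidableEq V]
    (k : ℕ) (hk : 3 ≤ k) (E : Finset (Finset V)) (hE : ∀ e ∈ E, e.card = 2) :
    ¬ HasThreeComb (E.image (hedge k)) := by
  rintro ⟨e1, h1, e2, h2, e3, h3, e4, h4, h12, h13, h23, h41, h42, h43,
    d12, d13, d23, nd1, nd2, nd3⟩
  simp only [Finset.mem_image] at h1 h2 h3 h4
  obtain ⟨g1, hg1, rfl⟩ := h1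
  obtain ⟨g2, hg2, rfl⟩ := h2
  obtain ⟨g3, hg3, rfl⟩ := h3
  obtain ⟨f, hf, rfl⟩ := h4
  obtain ⟨x1, hx1f, hx1⟩ := exists_common (fun h => h41 (congrArg _ h)) nd1
  obtain ⟨x2, hx2f, hx2⟩ := exists_common (fun h => h42 (congrArg _ h)) nd2
  obtain ⟨x3, hx3f, hx3⟩ := exists_common (fun h => h43 (congrArg _ h)) nd3
  have d12' := disjoint_base d12
  have d13' := disjoint_base d13
  have d23' := disjoint_base d23
  have n12 : x1 ≠ x2 := fun h => Finset.disjoint_left.1 d12' hx1 (h ▸ hx2)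
  have n13 : x1 ≠ x3 := fun h => Finset.disjoint_left.1 d13' hx1 (h ▸ hx3)
  have n23 : x2 ≠ x3 := fun h => Finset.disjoint_left.1 d23' hx2 (h ▸ hx3)
  have hsub : ({x1, x2, x3} : Finset V) ⊆ f := by
    intro x hx
    simp only [Finset.mem_insert, Finset.mem_singleton] at hx
    rcases hx with rfl | rfl | rfl <;> assumption
  have := Finset.card_le_card hsub
  rw [Finset.card_insert_of_notMem (by simp [n12, n13]),
    Finset.card_insert_of_notMem (by simp [n23]), Finset.card_singleton, hE f hf] at this
  omega
end
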